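/- arXiv:2501.12062 — 4 statements merged into one kernel-verified Lean document; each statement's English description precedes it below -/
import Mathlib

section
/- If G is a graph with chromatic number greater than n, then the categorical (tensor) product of G with the complete graph K_{n+1} also has chromatic number greater than n. -/
/-!
Given a proper colouring of `G × K_m` with fewer than `m` colours, pigeonhole yields for every
vertex `u` of `G` two distinct `i u ≠ j u` with `(u, i u)` and `(u, j u)` of the same colour.
Colouring `u` by the colour of `(u, i u)` is proper on `G`: for adjacent `u, v`, the vertex
`(u, i u)` is adjacent to `(v, i v)` if `i u ≠ i v`, and otherwise to `(v, j v)`, which has the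
colour of `(v, i v)`.
-/

/-- The categorical (tensor) product of two simple graphs. -/
def tensorProd {α β : Type*} (G : SimpleGraph α) (H : SimpleGraph β) :
    SimpleGraph (α × β) where
  Adj x y := G.Adj x.1 y.1 ∧ H.Adj x.2 y.2
  symm := ⟨fun _ _ h => ⟨h.1.symm, h.2.symm⟩⟩
  loopless := ⟨fun x h => G.loopless.irrefl x.1 h.1⟩

namespace tensorProd

variable {α β γ : Type*} {G : SimpleGraph α}

theorem adj_top_iff {u v : α} {i j : β} :
    (tensorProd G (⊤ : SimpleGraph β)).Adj (u, i) (v, j) ↔ G.Adj u v ∧ i ≠ j :=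
  Iff.rfl

theorem exists_ne_coloring_eq [Fintype β] [Fintype γ] (h : Fintype.card γ < Fintype.card β)
    (C : (tensorProd G (⊤ : SimpleGraph β)).Coloring γ) (u : α) :
    ∃ i j : β, i ≠ j ∧ C (u, i) = C (u, j) :=
  Fintype.exists_ne_map_eq_of_card_lt (fun i => C (u, i)) h

theorem colorable_of_colorable_top [Fintype β] {k : ℕ} (hk : k < Fintype.card β)
    (hcol : (tensorProd G (⊤ : SimpleGraph β)).Colorable k) : G.Colorable k := by
  obtain ⟨C⟩ := hcol
  choose i j hij hC using exists_ne_coloring_eq (by simpa using hk) C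
  refine ⟨.mk (fun u => C (u, i u)) fun {u v} huv hcolor => ?_⟩
  by_cases hi : i u = i v
  · exact C.valid (adj_top_iff.2 ⟨huv, hi ▸ hij v⟩) (hcolor.trans (hC v))
  · exact C.valid (adj_top_iff.2 ⟨huv, hi⟩) hcolor

end tensorProd

/-- If χ(G) > n then χ(G × K_{n+1}) > n. -/
theorem stmt0 {α : Type*} (G : SimpleGraph α) (n : ℕ)
    (h : (n : ℕ∞) < G.chromaticNumber) :
    (n : ℕ∞) < (tensorProd G (SimpleGraph.completeGraph (Fin (n + 1)))).chromaticNumber := by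
  simp only [← not_le, SimpleGraph.chromaticNumber_le_iff_colorable] at h ⊢
  exact fun hcol => h (tensorProd.colorable_of_colorable_top (by simp) hcol)
end

section
/- There is a graph homomorphism from the exponential graph K_n^{K_{n+1}} to K_n, obtained by mapping each function f : [n+1] → [n] to an arbitrary value that f attains at least twice (such a value exists by the pigeonhole principle). -/
/-! A value `f i = f i'` with `i ≠ i'` is never a value of a neighbour `g` of `f`: whichever
`j` satisfies `g j = f i`, it differs from `i` or from `i'`. So adjacent functions have
disjoint sets of repeated values, and any choice of a repeated value is a proper colouring. -/

/-- The exponential graph `K_n^{K_{n+1}}`: vertices are functions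
`Fin (n+1) → Fin n`, with `f` adjacent to `g` iff `f i ≠ g j` for all `i ≠ j`. -/
def expGraph (n : ℕ) : SimpleGraph (Fin (n + 1) → Fin n) where
  Adj f g := ∀ i j, i ≠ j → f i ≠ g j
  symm := ⟨fun _ _ h i j hij => Ne.symm (h j i (Ne.symm hij))⟩
  loopless := ⟨fun f h => by
    have hinj : Function.Injective f := by
      intro i j hf
      by_contra hne
      exact h i j hne hf
    have := Fintype.card_le_of_injective f hinj
    simp [Fintype.card_fin] at this⟩

namespace expGraph

variable {n : ℕ}

theorem exists_ne_apply_eq (f : Fin (n + 1) → Fin n) : ∃ i j, i ≠ j ∧ f i = f j :=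
  Fintype.exists_ne_map_eq_of_card_lt f (by simp)

theorem Adj.apply_ne_of_apply_eq {f g : Fin (n + 1) → Fin n} (hfg : (expGraph n).Adj f g)
    {i i' : Fin (n + 1)} (hii' : i ≠ i') (hf : f i = f i') (j : Fin (n + 1)) : f i ≠ g j := by
  by_cases hij : i = j
  · subst hij
    rw [hf]
    exact hfg i' i hii'.symm
  · exact hfg i j hij

noncomputable def repeatedValue (f : Fin (n + 1) → Fin n) : Fin n :=
  f (exists_ne_apply_eq f).choose

theorem exists_repeatedValue_eq (f : Fin (n + 1) → Fin n) :
    ∃ i j, i ≠ j ∧ f i = f j ∧ repeatedValue f = f i :=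
  let ⟨j, hij, hf⟩ := (exists_ne_apply_eq f).choose_spec
  ⟨_, j, hij, hf, rfl⟩

noncomputable def homCompleteGraph : expGraph n →g SimpleGraph.completeGraph (Fin n) where
  toFun := repeatedValue
  map_rel' {f g} hfg := by
    obtain ⟨i, i', hii', hf, hfi⟩ := exists_repeatedValue_eq f
    obtain ⟨j, -, -, -, hgj⟩ := exists_repeatedValue_eq g
    rw [hfi, hgj]
    exact Adj.apply_ne_of_apply_eq hfg hii' hf j

end expGraph

/-- There is a graph homomorphism from `K_n^{K_{n+1}}` to `K_n` mapping every
function `f : Fin (n+1) → Fin n` to a value that `f` attains at least twice. -/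
theorem stmt1 (n : ℕ) :
    ∃ h : expGraph n →g SimpleGraph.completeGraph (Fin n),
      ∀ f : Fin (n + 1) → Fin n, ∃ i j, i ≠ j ∧ f i = f j ∧ h f = f i :=
  ⟨expGraph.homCompleteGraph, expGraph.exists_repeatedValue_eq⟩
end

section
/- Let ℓ ≥ 3, r ≥ 4, and let f : {0,1,2}^n → [ℓ] be a polymorphism of (LO^r_3, CF^r_ℓ). If S, T ⊆ [n] are disjoint sets with f(2·1_S) = f(2·1_T), then X = [n] \ (S ∪ T) is a {f(0⃗)}-avoiding set: for every Y with X ⊆ Y ⊆ [n], f(1_Y) ≠ f(0⃗), where 0⃗ is the all-zeros vector. -/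
/-- A tuple has a uniquely-occurring entry. -/
def hasUniqueEntry {r k : ℕ} (x : Fin r → Fin k) : Prop :=
  ∃ i, ∀ j, j ≠ i → x j ≠ x i

/-- A tuple has a unique maximum entry. -/
def hasUniqueMax {r k : ℕ} (x : Fin r → Fin k) : Prop :=
  ∃ i, ∀ j, j ≠ i → x j < x i

/-- `f` is an `n`-ary polymorphism of `(LO^r_3, CF^r_l)`. -/
def IsLOCFPoly (r n l : ℕ) (f : (Fin n → Fin 3) → Fin l) : Prop :=
  ∀ M : Fin r → Fin n → Fin 3,
    (∀ c, hasUniqueMax fun i => M i c) → hasUniqueEntry fun i => f (M i)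

/-!
Stack the rows `2·1_S`, `2·1_T`, `1_Y` and `r - 3` zero rows. Every column has a unique maximum:
the entry `2` on `S ∪ T` (as `S` and `T` are disjoint), and the entry `1` of `1_Y` elsewhere (as `Y`
covers the rest). If `f(1_Y) = f(0)`, the images of the rows take the value `f(2·1_S)` twice and the
value `f(0)` at least twice, so none of them occurs uniquely.
-/

def zeroExtend {m k : ℕ} [NeZero k] (r : ℕ) (x : Fin m → Fin k) : Fin r → Fin k :=
  fun i => if h : i.val < m then x ⟨i, h⟩ else 0

/-- Among at least two entries a unique maximum is positive, so padding by zeros keeps it unique. -/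
theorem hasUniqueMax.zeroExtend {m k r : ℕ} [NeZero k] {x : Fin m → Fin k}
    (hm : 2 ≤ m) (hmr : m ≤ r) (hx : hasUniqueMax x) : hasUniqueMax (zeroExtend r x) := by
  obtain ⟨i, hi⟩ := hx
  have hpos : 0 < x i := by
    obtain ⟨j, hji⟩ : ∃ j : Fin m, j ≠ i := Fintype.exists_ne_of_one_lt_card (by simp; omega) i
    exact lt_of_le_of_lt (Fin.zero_le _) (hi j hji)
  refine ⟨⟨i, by omega⟩, fun j hj => ?_⟩
  by_cases hjm : j.val < m
  · simpa [_root_.zeroExtend, hjm] using hi ⟨j, hjm⟩ (fun h => hj (Fin.ext (by simp [← h])))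
  · simpa [_root_.zeroExtend, hjm] using hpos

theorem not_hasUniqueEntry_ite_lt_two {r k : ℕ} (hr : 4 ≤ r) (a b : Fin k) :
    ¬ hasUniqueEntry fun i : Fin r => if i.val < 2 then a else b := by
  rintro ⟨i, hi⟩
  by_cases hi2 : i.val < 2
  · exact hi ⟨1 - i.val, by omega⟩ (Fin.ne_of_val_ne (by dsimp only; omega))
      (by simp only [hi2, show 1 - i.val < 2 by omega, if_true])
  · let j : ℕ := if i.val = 2 then 3 else 2
    have hj : 2 ≤ j ∧ j < r ∧ j ≠ i.val := by dsimp only [j]; split_ifs <;> omega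
    exact hi ⟨j, hj.2.1⟩ (Fin.ne_of_val_ne hj.2.2)
      (by simp only [hi2, show ¬ j < 2 by omega, if_false])

theorem IsLOCFPoly.apply_ne_apply_zero {r n l : ℕ} {f : (Fin n → Fin 3) → Fin l}
    (hf : IsLOCFPoly r n l f) (hr : 4 ≤ r) (u v w : Fin n → Fin 3)
    (hcol : ∀ c, hasUniqueMax ![u c, v c, w c]) (huv : f u = f v) : f w ≠ f 0 := by
  intro hw
  let M : Fin r → Fin n → Fin 3 := fun i c => zeroExtend r ![u c, v c, w c] i
  have hM : (fun i => f (M i)) = fun i : Fin r => if i.val < 2 then f u else f 0 := by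
    funext ⟨i, hi⟩
    rcases i with _ | _ | _ | i
    · rfl
    · exact huv.symm
    · exact hw
    · rw [if_neg (by simp)]
      exact congrArg f (funext fun c => dif_neg (by simp))
  have := hf M fun c => (hcol c).zeroExtend (by norm_num) (by omega)
  exact not_hasUniqueEntry_ite_lt_two hr _ _ (hM ▸ this)

theorem hasUniqueMax_indicators {n : ℕ} {S T Y : Finset (Fin n)} (hST : Disjoint S T)
    (hY : Finset.univ \ (S ∪ T) ⊆ Y) (c : Fin n) :
    hasUniqueMax ![if c ∈ S then 2 else 0, if c ∈ T then 2 else 0,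
      if c ∈ Y then (1 : Fin 3) else 0] := by
  have hY2 : (if c ∈ Y then (1 : Fin 3) else 0) < 2 := by split_ifs <;> decide
  by_cases hcS : c ∈ S
  · have hcT : c ∉ T := Finset.disjoint_left.mp hST hcS
    refine ⟨0, fun j hj => ?_⟩
    fin_cases j <;> simp_all
  by_cases hcT : c ∈ T
  · refine ⟨1, fun j hj => ?_⟩
    fin_cases j <;> simp_all
  · have hcY : c ∈ Y := hY (by simp [hcS, hcT])
    refine ⟨2, fun j hj => ?_⟩
    fin_cases j <;> simp_all

theorem stmt8_general (l r n : ℕ) (hr : 4 ≤ r)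
    (f : (Fin n → Fin 3) → Fin l) (hf : IsLOCFPoly r n l f)
    (S T : Finset (Fin n)) (hST : Disjoint S T)
    (h : f (fun i => if i ∈ S then 2 else 0) = f (fun i => if i ∈ T then 2 else 0)) :
    ∀ Y : Finset (Fin n), Finset.univ \ (S ∪ T) ⊆ Y →
      f (fun i => if i ∈ Y then 1 else 0) ≠ f (fun _ => 0) := fun _ hY =>
  hf.apply_ne_apply_zero hr _ _ _ (hasUniqueMax_indicators hST hY) h

/-- Let `l ≥ 3`, `r ≥ 4`, `f` a polymorphism of `(LO^r_3, CF^r_l)`. If `S, T` are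
disjoint with `f(2·1_S) = f(2·1_T)`, then `X = [n] \ (S ∪ T)` is `{f(0)}`-avoiding:
for every `Y ⊇ X`, `f(1_Y) ≠ f(0)`. -/
theorem stmt8 (l r n : ℕ) (hl : 3 ≤ l) (hr : 4 ≤ r)
    (f : (Fin n → Fin 3) → Fin l) (hf : IsLOCFPoly r n l f)
    (S T : Finset (Fin n)) (hST : Disjoint S T)
    (h : f (fun i => if i ∈ S then 2 else 0) = f (fun i => if i ∈ T then 2 else 0)) :
    ∀ Y : Finset (Fin n), Finset.univ \ (S ∪ T) ⊆ Y →
      f (fun i => if i ∈ Y then 1 else 0) ≠ f (fun _ => 0) :=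
  stmt8_general l r n hr f hf S T hST h
end

section
/- Deciding whether an instance of the CSP with template CF^4_2 has a solution is equivalent to solvability of a system of linear equations over Z_2: a 4-uniform hypergraph has a conflict-free 2-colouring if and only if the system {x_a + x_b + x_c + x_d ≡ 1 (mod 2) : {a,b,c,d} an edge} has a solution over Z_2. -/
theorem exists_forall_ne_iff_sum_eq_one (g : Fin 4 → ZMod 2) :
    (∃ i, ∀ j ≠ i, g j ≠ g i) ↔ g 0 + g 1 + g 2 + g 3 = 1 := by
  revert g
  decide

/-- A 4-uniform hypergraph (edges given as quadruples of vertices) has a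
conflict-free 2-colouring iff the corresponding system of linear equations
`x_a + x_b + x_c + x_d = 1` over `Z_2` has a solution. -/
theorem stmt9 {V : Type*} (E : Set (Fin 4 → V)) :
    (∃ c : V → Fin 2, ∀ e ∈ E, ∃ i : Fin 4, ∀ j ≠ i, c (e j) ≠ c (e i)) ↔
    (∃ x : V → ZMod 2, ∀ e ∈ E, x (e 0) + x (e 1) + x (e 2) + x (e 3) = 1) :=
  -- `ZMod 2` is `Fin 2` by definition, so each colouring is literally a candidate solution.
  exists_congr fun c => forall₂_congr fun e _ => exists_forall_ne_iff_sum_eq_one (c ∘ e)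
end
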